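/- L²-stability of the potential part of the low-regularity integrator (Lemma 5.1, Fourier form): For every B > 0 there exists a constant C > 0 such that for all τ ∈ (0,1], all sequences ξ̂ : ℤ → ℂ with ξ̂_{−k} = conj(ξ̂_k) for all k and sup_{k} |ξ̂_k| ≤ B, and all h ∈ ℓ²(ℤ;ℂ), setting d_k = (1/τ)∫₀^τ e^{−isk²} ds and T(h)_k = h_k + iτ · conj(d_k) · Σ_{k₁+k₂=k} ξ̂_{k₁} d_{k₂} h_{k₂} (the sum converging absolutely), one has (Σ_{k∈ℤ} |T(h)_k|²)^{1/2} ≤ (1 + Cτ) (Σ_{k∈ℤ} |h_k|²)^{1/2}. -/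

import Mathlib

/-!
Write `d_k` for the symbol of `D_τ`, so that `T = 1 + iτ A` with `A h = conj d · (ξ ⋆ (d h))`.
Because `ξ` is real-valued, `A` is self-adjoint on `ℓ²`, hence `⟨h, iτ A h⟩` is purely imaginary
and `‖T h‖² = ‖h‖² + τ² ‖A h‖²`. By Cauchy–Schwarz, `‖A h‖ ≤ B ‖d‖₂² ‖h‖₂`, and since
`|d_k| ≤ min(1, 2/(τ k²))` one has `‖d‖₂² ≲ τ^{-1/2}`; therefore `τ² ‖A h‖² ≲ B² τ ‖h‖²`.
-/

open Finset Complex ComplexConjugate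

/-- The average `(1/τ) ∫₀^τ e^{isα} ds` of a complex exponential; `avgExp τ (−k²)` is the
Fourier multiplier symbol `d_k` of `D_τ = (e^{iτ∂_x²} − 1)(iτ∂_x²)⁻¹`. -/
noncomputable def avgExp (τ α : ℝ) : ℂ :=
  (τ : ℂ)⁻¹ * ∫ s in (0 : ℝ)..τ, Complex.exp (Complex.I * (s : ℂ) * (α : ℂ))

/-- `min (1, s² / n²)` is dominated by `6 s² / ((n + s) (n + 1 + s))`, whose sum over `n`
telescopes to `6 s`. -/
lemma le_telescoping_of_mul_sq_le {x s : ℝ} {n : ℕ} (hs : 1 ≤ s) (h0 : 0 ≤ x) (h1 : x ≤ 1)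
    (h2 : x * n ^ 2 ≤ s ^ 2) : x ≤ 6 * s ^ 2 * (1 / (n + s) - 1 / (n + 1 + s)) := by
  have hn : (0 : ℝ) ≤ n := n.cast_nonneg
  have hden : 0 < (n + s) * (n + 1 + s) := by positivity
  rw [div_sub_div _ _ (by positivity) (by positivity), ← mul_div_assoc, le_div_iff₀ hden]
  rcases le_total (n : ℝ) s with hns | hsn
  · nlinarith [mul_le_mul h1 (le_refl ((n + s) * (n + 1 + s))) hden.le zero_le_one]
  · nlinarith [mul_nonneg h0 (mul_nonneg (sub_nonneg.2 hsn) (by linarith : (0:ℝ) ≤ 2 * n - 1))]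

lemma summable_and_tsum_le_of_mul_sq_le {g : ℕ → ℝ} {s : ℝ} (hs : 1 ≤ s) (h0 : ∀ n, 0 ≤ g n)
    (h1 : ∀ n, g n ≤ 1) (h2 : ∀ n, g n * n ^ 2 ≤ s ^ 2) : Summable g ∧ ∑' n, g n ≤ 6 * s := by
  have hpartial : ∀ n, ∑ i ∈ range n, g i ≤ 6 * s := fun n ↦ calc
    ∑ i ∈ range n, g i ≤ ∑ i ∈ range n, 6 * s ^ 2 * (1 / (i + s) - 1 / (↑(i + 1) + s)) :=
      sum_le_sum fun i _ ↦ by exact_mod_cast le_telescoping_of_mul_sq_le hs (h0 i) (h1 i) (h2 i)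
    _ = 6 * s ^ 2 * (1 / s - 1 / (n + s)) := by
      rw [← mul_sum, sum_range_sub' (fun i : ℕ ↦ 1 / ((i : ℝ) + s))]; simp
    _ ≤ 6 * s ^ 2 * (1 / s) := by gcongr; exact sub_le_self _ (by positivity)
    _ = 6 * s := by field_simp
  exact ⟨summable_of_sum_range_le h0 hpartial, Real.tsum_le_of_sum_range_le h0 hpartial⟩

lemma summable_and_tsum_int_le_of_mul_sq_le {f : ℤ → ℝ} {s : ℝ} (hs : 1 ≤ s) (h0 : ∀ k, 0 ≤ f k)
    (h1 : ∀ k, f k ≤ 1) (h2 : ∀ k : ℤ, f k * (k : ℝ) ^ 2 ≤ s ^ 2) :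
    Summable f ∧ ∑' k, f k ≤ 12 * s := by
  obtain ⟨hnat, hnat_le⟩ := summable_and_tsum_le_of_mul_sq_le (g := fun n : ℕ ↦ f n) hs
    (fun n ↦ h0 n) (fun n ↦ h1 n) (fun n ↦ by exact_mod_cast h2 n)
  obtain ⟨hneg, hneg_le⟩ := summable_and_tsum_le_of_mul_sq_le (g := fun n : ℕ ↦ f (-(n + 1))) hs
    (fun n ↦ h0 _) (fun n ↦ h1 _) fun n ↦ by
      refine le_trans (mul_le_mul_of_nonneg_left ?_ (h0 _)) (h2 (-(n + 1)))
      push_cast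
      nlinarith [n.cast_nonneg (α := ℝ)]
  exact ⟨.of_nat_of_neg_add_one hnat hneg, by rw [tsum_of_nat_of_neg_add_one hnat hneg]; linarith⟩

lemma norm_avgExp_le_one {τ : ℝ} (hτ : 0 < τ) (α : ℝ) : ‖avgExp τ α‖ ≤ 1 := by
  have hint : ‖∫ s in (0 : ℝ)..τ, exp (I * s * α)‖ ≤ 1 * |τ - 0| :=
    intervalIntegral.norm_integral_le_of_norm_le_const fun s _ ↦ by
      rw [show I * s * α = ((s * α : ℝ) : ℂ) * I by push_cast; ring, norm_exp_ofReal_mul_I]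
  rw [avgExp, norm_mul, norm_inv, norm_real, Real.norm_of_nonneg hτ.le]
  rw [sub_zero, abs_of_pos hτ, one_mul] at hint
  exact inv_mul_le_one_of_le₀ hint hτ.le

lemma norm_avgExp_mul_abs_le {τ : ℝ} (hτ : 0 < τ) (α : ℝ) : ‖avgExp τ α‖ * |α| ≤ 2 / τ := by
  rcases eq_or_ne α 0 with rfl | hα
  · simp only [abs_zero, mul_zero]; positivity
  have hc : I * α ≠ 0 := by simp [hα]
  have hint : ∫ s in (0 : ℝ)..τ, exp (I * s * α) = (exp (((α * τ : ℝ) : ℂ) * I) - 1) / (I * α) := by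
    simp_rw [mul_right_comm I]
    rw [integral_exp_mul_complex hc]
    simp only [ofReal_zero, mul_zero, exp_zero]; push_cast; ring_nf
  have hnum : ‖exp (((α * τ : ℝ) : ℂ) * I) - 1‖ ≤ 2 :=
    (norm_sub_le _ _).trans (by rw [norm_exp_ofReal_mul_I, norm_one]; norm_num)
  rw [avgExp, hint, norm_mul, norm_div, norm_inv, norm_real, Real.norm_of_nonneg hτ.le, norm_mul,
    norm_I, one_mul, norm_real, Real.norm_eq_abs]
  have hα' : 0 < |α| := abs_pos.mpr hα
  rw [mul_assoc, div_mul_cancel₀ _ hα'.ne', inv_mul_eq_div]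
  gcongr

lemma summable_and_sq_mul_tsum_norm_avgExp_sq_le {τ : ℝ} (hτ : 0 < τ) (hτ1 : τ ≤ 1) :
    Summable (fun k : ℤ ↦ ‖avgExp τ (-((k : ℝ) ^ 2))‖ ^ 2) ∧
      (τ * ∑' k : ℤ, ‖avgExp τ (-((k : ℝ) ^ 2))‖ ^ 2) ^ 2 ≤ 288 * τ := by
  set s := √(2 / τ)
  have hs : 1 ≤ s := Real.one_le_sqrt.mpr (by rw [le_div_iff₀ hτ]; linarith)
  have hs2 : s ^ 2 = 2 / τ := Real.sq_sqrt (by positivity)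
  obtain ⟨hsum, hle⟩ := summable_and_tsum_int_le_of_mul_sq_le hs (fun k ↦ sq_nonneg _)
    (fun k ↦ pow_le_one₀ (norm_nonneg _) (norm_avgExp_le_one hτ _)) fun k ↦ by
      have hk := norm_avgExp_mul_abs_le hτ (-((k : ℝ) ^ 2))
      rw [abs_neg, abs_of_nonneg (sq_nonneg _)] at hk
      calc _ ≤ ‖avgExp τ (-((k : ℝ) ^ 2))‖ * (k : ℝ) ^ 2 := by
            gcongr
            exact pow_le_of_le_one (norm_nonneg _) (norm_avgExp_le_one hτ _) two_ne_zero
        _ ≤ s ^ 2 := hs2 ▸ hk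
  refine ⟨hsum, ?_⟩
  calc _ ≤ (τ * (12 * s)) ^ 2 := by gcongr
    _ = 288 * τ := by rw [mul_pow, mul_pow, hs2]; field_simp; ring

section SquareSummable

variable {ι : Type*}

lemma summable_and_sq_tsum_mul_le {u v : ι → ℝ} (hu0 : ∀ i, 0 ≤ u i) (hv0 : ∀ i, 0 ≤ v i)
    (hu : Summable (fun i ↦ u i ^ 2)) (hv : Summable (fun i ↦ v i ^ 2)) :
    Summable (fun i ↦ u i * v i) ∧
      (∑' i, u i * v i) ^ 2 ≤ (∑' i, u i ^ 2) * ∑' i, v i ^ 2 := by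
  obtain ⟨hsum, hle⟩ := Real.summable_and_inner_le_Lp_mul_Lq_tsum_of_nonneg .two_two hu0 hv0
    (by simpa only [Real.rpow_two] using hu) (by simpa only [Real.rpow_two] using hv)
  simp only [Real.rpow_two, ← Real.sqrt_eq_rpow] at hle
  refine ⟨hsum, ?_⟩
  calc (∑' i, u i * v i) ^ 2
      ≤ (√(∑' i, u i ^ 2) * √(∑' i, v i ^ 2)) ^ 2 :=
        pow_le_pow_left₀ (tsum_nonneg fun i ↦ mul_nonneg (hu0 i) (hv0 i)) hle 2
    _ = (∑' i, u i ^ 2) * ∑' i, v i ^ 2 := by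
        rw [mul_pow, Real.sq_sqrt (tsum_nonneg fun i ↦ sq_nonneg _),
          Real.sq_sqrt (tsum_nonneg fun i ↦ sq_nonneg _)]

lemma summable_norm_mul_of_sq {u v : ι → ℂ} (hu : Summable (‖u ·‖ ^ 2))
    (hv : Summable (‖v ·‖ ^ 2)) : Summable (fun i ↦ ‖u i * v i‖) := by
  simpa only [norm_mul] using
    (summable_and_sq_tsum_mul_le (fun i ↦ norm_nonneg (u i)) (fun i ↦ norm_nonneg (v i)) hu hv).1

lemma summable_and_tsum_norm_add_sq_eq {u v : ι → ℂ} (hu : Summable (‖u ·‖ ^ 2))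
    (hv : Summable (‖v ·‖ ^ 2)) (horth : (∑' i, conj (u i) * v i).re = 0) :
    Summable (fun i ↦ ‖u i + v i‖ ^ 2) ∧
      ∑' i, ‖u i + v i‖ ^ 2 = ∑' i, ‖u i‖ ^ 2 + ∑' i, ‖v i‖ ^ 2 := by
  have hcross : Summable (fun i ↦ conj (u i) * v i) := .of_norm <| by
    simpa only [norm_mul, RCLike.norm_conj] using summable_norm_mul_of_sq hu hv
  have hre : Summable (fun i ↦ 2 * (conj (u i) * v i).re) :=
    (reCLM.summable hcross).mul_left 2
  have hexpand : ∀ i, ‖u i + v i‖ ^ 2 = ‖u i‖ ^ 2 + ‖v i‖ ^ 2 + 2 * (conj (u i) * v i).re := by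
    intro i
    rw [← normSq_eq_norm_sq, ← normSq_eq_norm_sq, ← normSq_eq_norm_sq, normSq_add,
      ← conj_re, map_mul, conj_conj, mul_comm]
  simp_rw [hexpand]
  refine ⟨(hu.add hv).add hre, ?_⟩
  rw [(hu.add hv).tsum_add hre, hu.tsum_add hv, tsum_mul_left, ← re_tsum hcross, horth,
    mul_zero, add_zero]

end SquareSummable

section Convolution

variable {G : Type*} [AddCommGroup G] {ξ a : G → ℂ} {B : ℝ}

lemma norm_mul_sub_le (hξ : ∀ j, ‖ξ j‖ ≤ B) (k j : G) : ‖ξ j * a (k - j)‖ ≤ B * ‖a (k - j)‖ := by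
  rw [norm_mul]; gcongr; exact hξ j

lemma norm_tsum_mul_sub_le (hξ : ∀ j, ‖ξ j‖ ≤ B) (ha : Summable (‖a ·‖)) (k : G) :
    ‖∑' j, ξ j * a (k - j)‖ ≤ B * ∑' j, ‖a j‖ := by
  have hsum := ((Equiv.subLeft k).summable_iff.mpr ha).mul_left B
  calc ‖∑' j, ξ j * a (k - j)‖ ≤ ∑' j, B * ‖a (k - j)‖ :=
        tsum_of_norm_bounded hsum.hasSum (norm_mul_sub_le hξ k)
    _ = B * ∑' j, ‖a j‖ := by rw [tsum_mul_left, ← (Equiv.subLeft k).tsum_eq (‖a ·‖)]; rfl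

/-- Convolution with `ξ` is self-adjoint when `ξ (-j) = conj (ξ j)`, so `⟨a, ξ ⋆ a⟩` is real. -/
lemma im_tsum_conj_mul_tsum_mul_sub_eq_zero (hsym : ∀ j, ξ (-j) = conj (ξ j))
    (hξ : ∀ j, ‖ξ j‖ ≤ B) (ha : Summable (‖a ·‖)) :
    (∑' k, conj (a k) * ∑' j, ξ j * a (k - j)).im = 0 := by
  set P : G × G → ℂ := fun p ↦ conj (a p.1) * (ξ p.2 * a (p.1 - p.2))
  have hP : Summable P := by
    have hprod := (ha.mul_of_nonneg ha (fun _ ↦ norm_nonneg _) fun _ ↦ norm_nonneg _).mul_left B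
    refine .of_norm_bounded
      ((Equiv.prodShear (Equiv.refl G) Equiv.subLeft).summable_iff.mpr hprod) fun p ↦ ?_
    rw [norm_mul, RCLike.norm_conj]
    calc ‖a p.1‖ * ‖ξ p.2 * a (p.1 - p.2)‖ ≤ ‖a p.1‖ * (B * ‖a (p.1 - p.2)‖) := by
          gcongr; exact norm_mul_sub_le hξ _ _
      _ = _ := by
          simp only [Function.comp, Equiv.prodShear_apply, Equiv.refl_apply,
            Equiv.subLeft_apply]
          ring
  have hZ : ∑' k, conj (a k) * ∑' j, ξ j * a (k - j) = ∑' p, P p := by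
    simp_rw [← tsum_mul_left]
    exact (hP.tsum_prod' hP.prod_factor).symm
  have hinv : Function.Involutive (fun p : G × G ↦ (p.1 - p.2, -p.2)) := fun p ↦ by simp
  have hconj : conj (∑' p, P p) = ∑' p, P p := by
    rw [conj_tsum, ← (hinv.toPerm _).tsum_eq P]
    refine tsum_congr fun p ↦ ?_
    simp only [P, Function.Involutive.coe_toPerm, map_mul, conj_conj, sub_neg_eq_add,
      sub_add_cancel, hsym]
    ring
  rw [hZ, ← conj_eq_iff_im]
  exact hconj

end Convolution

section PotentialPart

variable {G : Type*} [AddCommGroup G] {d ξ h : G → ℂ} {B : ℝ}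

lemma summable_and_tsum_norm_conj_mul_conv_sq_le (hξ : ∀ j, ‖ξ j‖ ≤ B)
    (hd : Summable (‖d ·‖ ^ 2)) (hh : Summable (‖h ·‖ ^ 2)) :
    Summable (fun k ↦ ‖conj (d k) * ∑' j, ξ j * (d (k - j) * h (k - j))‖ ^ 2) ∧
      ∑' k, ‖conj (d k) * ∑' j, ξ j * (d (k - j) * h (k - j))‖ ^ 2 ≤
        (B * ∑' k, ‖d k‖ ^ 2) ^ 2 * ∑' k, ‖h k‖ ^ 2 := by
  obtain ⟨-, hL⟩ := summable_and_sq_tsum_mul_le (fun k ↦ norm_nonneg (d k))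
    (fun k ↦ norm_nonneg (h k)) hd hh
  have ha := summable_norm_mul_of_sq hd hh
  set L := ∑' k, ‖d k * h k‖
  simp only [← norm_mul] at hL
  have hpt : ∀ k, ‖conj (d k) * ∑' j, ξ j * (d (k - j) * h (k - j))‖ ^ 2 ≤
      (B * L) ^ 2 * ‖d k‖ ^ 2 := fun k ↦ by
    rw [norm_mul, RCLike.norm_conj, ← mul_pow, mul_comm (B * L)]
    gcongr
    exact norm_tsum_mul_sub_le (a := fun k ↦ d k * h k) hξ ha k
  have hsum := hd.mul_left ((B * L) ^ 2)
  refine ⟨.of_nonneg_of_le (fun k ↦ sq_nonneg _) hpt hsum, ?_⟩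
  calc _ ≤ ∑' k, (B * L) ^ 2 * ‖d k‖ ^ 2 :=
        Summable.tsum_le_tsum hpt (.of_nonneg_of_le (fun k ↦ sq_nonneg _) hpt hsum) hsum
    _ = B ^ 2 * L ^ 2 * ∑' k, ‖d k‖ ^ 2 := by rw [tsum_mul_left]; ring
    _ ≤ B ^ 2 * ((∑' k, ‖d k‖ ^ 2) * ∑' k, ‖h k‖ ^ 2) * ∑' k, ‖d k‖ ^ 2 := by
        gcongr
    _ = _ := by ring

/-- Here `Th = h + iτ A h` with `A = D_τ^* ξ D_τ` self-adjoint, so `Re ⟨h, iτ A h⟩ = 0` and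
`‖Th‖² = ‖h‖² + τ² ‖A h‖²`. -/
lemma summable_and_tsum_norm_sq_le {Th : G → ℂ} {τ : ℝ} (hsym : ∀ j, ξ (-j) = conj (ξ j))
    (hξ : ∀ j, ‖ξ j‖ ≤ B) (hd : Summable (‖d ·‖ ^ 2)) (hh : Summable (‖h ·‖ ^ 2))
    (hTh : ∀ k, Th k = h k + I * τ * conj (d k) * ∑' j, ξ j * d (k - j) * h (k - j)) :
    Summable (‖Th ·‖ ^ 2) ∧
      ∑' k, ‖Th k‖ ^ 2 ≤ (1 + (τ * B * ∑' k, ‖d k‖ ^ 2) ^ 2) * ∑' k, ‖h k‖ ^ 2 := by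
  set W := fun k ↦ ∑' j, ξ j * (d (k - j) * h (k - j))
  obtain ⟨hc, hc_le⟩ := summable_and_tsum_norm_conj_mul_conv_sq_le hξ hd hh
  have hTh' : Th = fun k ↦ h k + I * τ * (conj (d k) * W k) := by
    funext k; simp only [hTh, W, mul_assoc]
  have hnorm : ∀ k, ‖I * τ * (conj (d k) * W k)‖ ^ 2 = τ ^ 2 * ‖conj (d k) * W k‖ ^ 2 := by
    intro k; rw [norm_mul, mul_pow, norm_mul, norm_I, one_mul, norm_real, Real.norm_eq_abs, sq_abs]
  have horth : (∑' k, conj (h k) * (I * τ * (conj (d k) * W k))).re = 0 := by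
    have hrw : ∀ k, conj (h k) * (I * τ * (conj (d k) * W k)) =
        I * τ * (conj (d k * h k) * W k) := fun k ↦ by rw [map_mul]; ring
    simp_rw [hrw, tsum_mul_left, mul_re, I_re, I_im, ofReal_re, ofReal_im]
    rw [im_tsum_conj_mul_tsum_mul_sub_eq_zero (a := fun k ↦ d k * h k) hsym hξ
      (summable_norm_mul_of_sq hd hh)]
    ring
  obtain ⟨hsum, heq⟩ := summable_and_tsum_norm_add_sq_eq hh
    (by simpa only [hnorm] using hc.mul_left (τ ^ 2)) horth
  rw [hTh']
  refine ⟨hsum, ?_⟩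
  rw [heq, tsum_congr hnorm, tsum_mul_left]
  calc _ ≤ ∑' k, ‖h k‖ ^ 2 + τ ^ 2 * ((B * ∑' k, ‖d k‖ ^ 2) ^ 2 * ∑' k, ‖h k‖ ^ 2) := by
        gcongr
    _ = _ := by ring

end PotentialPart

lemma rpow_half_le_mul_rpow_half {x y c : ℝ} (hc : 0 ≤ c) (hy : 0 ≤ y) (hxy : x ≤ (1 + c) * y) :
    x ^ ((1 : ℝ) / 2) ≤ (1 + c) * y ^ ((1 : ℝ) / 2) := by
  rw [← Real.sqrt_eq_rpow, ← Real.sqrt_eq_rpow]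
  calc √x ≤ √((1 + c) ^ 2 * y) :=
        Real.sqrt_le_sqrt <| hxy.trans <| by gcongr; nlinarith
    _ = (1 + c) * √y := by rw [Real.sqrt_mul (by positivity), Real.sqrt_sq (by linarith)]

/-- L²-stability of the potential part of the low-regularity integrator (Lemma 5.1,
Fourier form): for every `B > 0` there is `C > 0` such that for all `τ ∈ (0,1]`, all
conjugate-symmetric `ξ̂` with `sup_k |ξ̂_k| ≤ B`, and all `h ∈ ℓ²(ℤ;ℂ)`, the map
`T(h)_k = h_k + iτ conj(d_k) Σ_{k₁+k₂=k} ξ̂_{k₁} d_{k₂} h_{k₂}` (with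
`d_k = (1/τ)∫₀^τ e^{−isk²} ds`) satisfies `‖T(h)‖_{ℓ²} ≤ (1 + Cτ) ‖h‖_{ℓ²}`. -/
theorem potential_part_L2_stability (B : ℝ) (hB : 0 < B) :
    ∃ C > 0, ∀ τ : ℝ, 0 < τ → τ ≤ 1 →
      ∀ ξ : ℤ → ℂ, (∀ k : ℤ, ξ (-k) = (starRingEnd ℂ) (ξ k)) → (∀ k, ‖ξ k‖ ≤ B) →
      ∀ h : ℤ → ℂ, Summable (fun k : ℤ => ‖h k‖ ^ 2) →
      ∀ Th : ℤ → ℂ,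
        (∀ k : ℤ, Th k = h k +
            Complex.I * (τ : ℂ) * (starRingEnd ℂ) (avgExp τ (-((k : ℝ) ^ 2))) *
              ∑' k₁ : ℤ, ξ k₁ * avgExp τ (-(((k - k₁ : ℤ) : ℝ) ^ 2)) * h (k - k₁)) →
        Summable (fun k : ℤ => ‖Th k‖ ^ 2) ∧
        (∑' k : ℤ, ‖Th k‖ ^ 2) ^ ((1 : ℝ) / 2) ≤
          (1 + C * τ) * (∑' k : ℤ, ‖h k‖ ^ 2) ^ ((1 : ℝ) / 2) := by
  refine ⟨288 * B ^ 2, by positivity, fun τ hτ hτ1 ξ hsym hξ h hh Th hTh ↦ ?_⟩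
  obtain ⟨hd, hS⟩ := summable_and_sq_mul_tsum_norm_avgExp_sq_le hτ hτ1
  obtain ⟨hsum, hle⟩ := summable_and_tsum_norm_sq_le
    (d := fun k : ℤ ↦ avgExp τ (-((k : ℝ) ^ 2))) hsym hξ hd hh hTh
  refine ⟨hsum, rpow_half_le_mul_rpow_half (by positivity) (tsum_nonneg fun k ↦ sq_nonneg _) ?_⟩
  refine hle.trans (mul_le_mul_of_nonneg_right ?_ (tsum_nonneg fun k ↦ sq_nonneg _))
  calc _ = 1 + B ^ 2 * (τ * ∑' k : ℤ, ‖avgExp τ (-((k : ℝ) ^ 2))‖ ^ 2) ^ 2 := by ring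
    _ ≤ 1 + B ^ 2 * (288 * τ) := by gcongr
    _ = 1 + 288 * B ^ 2 * τ := by ring
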